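/- arXiv:1907.05451 — 3 statements merged into one kernel-verified Lean document; each statement's English description precedes it below -/
import Mathlib

section
/- In the class-kernel setting: for every t ∈ T, every A ∈ Σ and every n ≥ 1, if f(t) = ⟨x, y⟩ ∈ X_i × Y_i and f(A) ∩ (X_i × Y_i) = U × V is a measurable rectangle with U ∈ 𝒳_i and V ∈ 𝒴_i, then the n-th iterate of the class kernel satisfies K_f^n(t, A) = (K_i(x))^n(y, V) · 1_U(x). -/
open MeasureTheory ProbabilityTheory Filter

universe u v

noncomputable section

/-- The `n`-th iterate of a Markov transition kernel: `kiter K 0` is the identity kernel and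
`kiter K (n+1) (s, A) = ∫ K(s', A) (kiter K n)(s, ds')`, so `kiter K n = K^n` for `n ≥ 1`. -/
def kiter {S : Type u} [MeasurableSpace S] (K : Kernel S S) : ℕ → Kernel S S
  | 0 => Kernel.id
  | n + 1 => K ∘ₖ kiter K n

lemma measurable_sigmaMk' {α : Type*} {β : α → Type*} [∀ a, MeasurableSpace (β a)] (i : α) :
    Measurable (@Sigma.mk α β i) := by
  rw [measurable_iff_comap_le]
  exact le_trans (MeasurableSpace.comap_mono (iInf_le _ i)) MeasurableSpace.comap_map_le

lemma kiter_succ_comm {S : Type u} [MeasurableSpace S] (K : Kernel S S) [IsSFiniteKernel K]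
    (n : ℕ) : kiter K (n + 1) = kiter K n ∘ₖ K := by
  induction n with
  | zero =>
    show K ∘ₖ Kernel.id = Kernel.id ∘ₖ K
    rw [Kernel.comp_id, Kernel.id_comp]
  | succ n ih =>
    calc kiter K (n + 2) = K ∘ₖ kiter K (n + 1) := rfl
    _ = K ∘ₖ (kiter K n ∘ₖ K) := by rw [ih]
    _ = (K ∘ₖ kiter K n) ∘ₖ K := (Kernel.comp_assoc _ _ _).symm
    _ = kiter K (n + 1) ∘ₖ K := rfl

/-- `K` is `π`-irreducible: from every point, every set of positive `π`-measure is reached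
with positive probability after some number `n ≥ 1` of steps. -/
def PiIrreducible {S : Type u} [MeasurableSpace S] (K : Kernel S S) (π : Measure S) : Prop :=
  ∀ s : S, ∀ A : Set S, MeasurableSet A → 0 < π A → ∃ n : ℕ, 1 ≤ n ∧ 0 < kiter K n s A

/-- `π` is a stationary distribution of `K`: `∫ K(s, A) π(ds) = π(A)` for all measurable `A`. -/
def StationaryFor {S : Type u} [MeasurableSpace S] (K : Kernel S S) (π : Measure S) : Prop :=
  ∀ A : Set S, MeasurableSet A → ∫⁻ s, K s A ∂π = π A

/-- `K` is periodic relative to `π`: there are `d ≥ 2` pairwise disjoint nonempty measurable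
sets `E_0, …, E_{d-1}` and a `π`-null measurable set `N` covering `S` such that from `E_i` the
kernel moves to `E_{(i+1) mod d}` with probability one. -/
def PeriodicK {S : Type u} [MeasurableSpace S] (K : Kernel S S) (π : Measure S) : Prop :=
  ∃ d : ℕ, ∃ hd : 2 ≤ d, ∃ E : Fin d → Set S, ∃ N : Set S,
    (∀ i, MeasurableSet (E i)) ∧ MeasurableSet N ∧ (∀ i, (E i).Nonempty) ∧
    Pairwise (fun i j => Disjoint (E i) (E j)) ∧
    (⋃ i, E i) ∪ N = Set.univ ∧ π N = 0 ∧
    ∀ i : Fin d, ∀ s ∈ E i, K s (E ⟨(i.1 + 1) % d, Nat.mod_lt _ (by omega)⟩) = 1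

/-- `K` is aperiodic relative to `π` if it is not periodic. -/
def AperiodicK {S : Type u} [MeasurableSpace S] (K : Kernel S S) (π : Measure S) : Prop :=
  ¬ PeriodicK K π

/-- Total variation norm of a (bounded signed) set function:
`‖λ‖ = sup_{A measurable} λ(A) − inf_{A measurable} λ(A)`. -/
def tvnorm {S : Type u} [MeasurableSpace S] (lam : Set S → ℝ) : ℝ :=
  (⨆ A : {A : Set S // MeasurableSet A}, lam A.1) - (⨅ A : {A : Set S // MeasurableSet A}, lam A.1)

/-- The iterates of `K` started at `s` converge to `π` in total variation norm:
`lim_{n→∞} ‖K^n(s, ·) − π‖ = 0`. -/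
def TVConvergesTo {S : Type u} [MeasurableSpace S] (K : Kernel S S) (π : Measure S) (s : S) : Prop :=
  Tendsto (fun n : ℕ => tvnorm (fun A => (kiter K (n + 1) s A).toReal - (π A).toReal))
    atTop (nhds 0)

/-- The data of the class-kernel setting for a single class function `f` on a probability
space `(T, Σ, π)`: a countable index set `I`, families of measurable spaces `(X i, 𝒳 i)` and
`(Y i, 𝒴 i)` whose disjoint union forms the generalized product space `C = ⨆ i, X i × Y i`,
an injective two-way measurable class function `f : T → C`, regular conditional probabilities
`v i : X i × 𝒴 i → [0,1]` disintegrating the (conditioned) pushforward `f_*π` on each class,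
parameterized Markov transition kernels `K i x` on `(Y i, 𝒴 i)` measurable in `x`, and the
resulting class kernel `Kf` on `(T, Σ)` given by
`Kf(t, A) = (K i x)(y, {y' | ⟨x, y'⟩ ∈ f(A)})` where `f(t) = ⟨i, x, y⟩`. -/
structure ClassKernelData (T : Type u) [MeasurableSpace T] (π : Measure T) where
  /-- the countable index set -/
  (I : Type v)
  [countI : Countable I]
  /-- the `X`-components of the generalized product space -/
  (X : I → Type v)
  /-- the `Y`-components of the generalized product space -/
  (Y : I → Type v)
  [mX : ∀ i, MeasurableSpace (X i)]
  [mY : ∀ i, MeasurableSpace (Y i)]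
  /-- the class function `f : T → C = ⨆ i, X i × Y i` -/
  f : T → Σ i : I, X i × Y i
  f_inj : Function.Injective f
  f_meas : Measurable f
  /-- `f` is two-way measurable: images of measurable sets are measurable -/
  f_image : ∀ A : Set T, MeasurableSet A → MeasurableSet (f '' A)
  /-- the regular conditional probabilities `v i : X i × 𝒴 i → [0,1]` -/
  v : ∀ i, X i → Measure (Y i)
  v_prob : ∀ i x, IsProbabilityMeasure (v i x)
  v_meas : ∀ i (V : Set (Y i)), MeasurableSet V → Measurable fun x => v i x V
  /-- the disintegration property: for each class `i` of positive `f_*π`-mass,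
  `(f_*π)_i(U × V) = ∫_U v_i(x, V) (f_*π)_i(dx × Y_i)` (stated in unnormalized form, which is
  equivalent since the normalizing constant appears identically on both sides) -/
  v_eq : ∀ i : I, 0 < π.map f (Set.range (Sigma.mk i)) →
    ∀ (U : Set (X i)) (V : Set (Y i)), MeasurableSet U → MeasurableSet V →
      (π.map f).comap (Sigma.mk i) (U ×ˢ V)
        = ∫⁻ x in U, v i x V ∂(((π.map f).comap (Sigma.mk i)).map Prod.fst)
  /-- the parameterized Markov transition kernels `K i x` on `(Y i, 𝒴 i)` -/
  K : ∀ i, X i → Kernel (Y i) (Y i)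
  K_markov : ∀ i x, IsMarkovKernel (K i x)
  K_meas : ∀ i (y : Y i) (V : Set (Y i)), MeasurableSet V → Measurable fun x => K i x y V
  /-- the class kernel `Kf` on `(T, Σ)` -/
  Kf : Kernel T T
  Kf_markov : IsMarkovKernel Kf
  /-- the class kernel is given by `Kf(t, A) = (K i x)(y, {y' ∈ Y i | ⟨x, y'⟩ ∈ f(A)})`
  where `f(t) = ⟨i, x, y⟩` -/
  Kf_eq : ∀ (t : T) (A : Set T), MeasurableSet A → ∀ (i : I) (x : X i) (y : Y i),
    f t = ⟨i, (x, y)⟩ →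
      Kf t A = K i x y {y' : Y i | (⟨i, (x, y')⟩ : Σ j : I, X j × Y j) ∈ f '' A}

attribute [instance] ClassKernelData.countI ClassKernelData.mX ClassKernelData.mY

/-- The projection `f_x` of a class function onto the `X`-components. -/
def ClassKernelData.fx {T : Type u} [MeasurableSpace T] {π : Measure T}
    (d : ClassKernelData T π) : T → Σ i : d.I, d.X i :=
  fun t => ⟨(d.f t).1, (d.f t).2.1⟩

/-- In the class-kernel setting: if `f(t) = ⟨x, y⟩ ∈ X i × Y i` and
`f(A) ∩ (X i × Y i) = U × V` is a measurable rectangle, then for every `n ≥ 1`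
the `n`-th iterate of the class kernel satisfies
`K_f^n(t, A) = (K i x)^n(y, V) · 1_U(x)`. -/
theorem stmt1 {T : Type u} [MeasurableSpace T] (π : Measure T) [IsProbabilityMeasure π]
    (d : ClassKernelData.{u, v} T π)
    (hirr : ∀ i x, PiIrreducible (d.K i x) (d.v i x))
    (haper : ∀ i x, AperiodicK (d.K i x) (d.v i x))
    (hstat : ∀ i x, StationaryFor (d.K i x) (d.v i x))
    (t : T) (A : Set T) (hA : MeasurableSet A) (n : ℕ) (hn : 1 ≤ n)
    (i : d.I) (x : d.X i) (y : d.Y i) (hft : d.f t = ⟨i, (x, y)⟩)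
    (U : Set (d.X i)) (V : Set (d.Y i)) (hU : MeasurableSet U) (hV : MeasurableSet V)
    (hrect : ∀ (x' : d.X i) (y' : d.Y i),
      (⟨i, (x', y')⟩ : Σ j : d.I, d.X j × d.Y j) ∈ d.f '' A ↔ x' ∈ U ∧ y' ∈ V) :
    kiter d.Kf n t A = kiter (d.K i x) n y V * U.indicator (fun _ => (1 : ENNReal)) x := by
  classical
  clear hirr haper hstat
  haveI := d.Kf_markov
  haveI := d.K_markov i x
  have hemb : MeasurableEmbedding d.f := ⟨d.f_inj, d.f_meas, fun {s} hs => d.f_image s hs⟩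
  set φ : d.Y i → (Σ j : d.I, d.X j × d.Y j) := fun y'' => ⟨i, (x, y'')⟩ with hφ
  have hφm : Measurable φ := (measurable_sigmaMk' i).comp measurable_prodMk_left
  have hrange : MeasurableSet (Set.range d.f) := hemb.measurableSet_range
  set Sx : Set (d.Y i) := φ ⁻¹' (Set.range d.f) with hSx
  have hSxm : MeasurableSet Sx := hφm hrange
  set θ : d.Y i → T := fun y'' => if h : φ y'' ∈ Set.range d.f then h.choose else t with hθ
  have hθf : ∀ y'' ∈ Sx, d.f (θ y'') = φ y'' := by
    intro y'' h
    have h' : φ y'' ∈ Set.range d.f := h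
    simp only [hθ, dif_pos h']
    exact h'.choose_spec
  have hθpre : ∀ B : Set T, θ ⁻¹' B =
      (Sx ∩ φ ⁻¹' (d.f '' B)) ∪ (Sxᶜ ∩ (if t ∈ B then Set.univ else ∅)) := by
    intro B
    ext y''
    by_cases h : y'' ∈ Sx
    · simp only [Set.mem_preimage, Set.mem_union, Set.mem_inter_iff, h, true_and,
        Set.mem_compl_iff, not_true, false_and, or_false]
      constructor
      · intro hb
        exact ⟨θ y'', hb, hθf y'' h⟩
      · rintro ⟨a, ha, hfa⟩
        have : a = θ y'' := d.f_inj (hfa.trans (hθf y'' h).symm)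
        rwa [← this]
    · have hth : θ y'' = t := dif_neg h
      simp only [Set.mem_preimage, hth, Set.mem_union, Set.mem_inter_iff, h, false_and,
        Set.mem_compl_iff, not_false_iff, true_and, false_or]
      by_cases htB : t ∈ B <;> simp [htB]
  have hθm : Measurable θ := by
    intro B hB
    rw [hθpre B]
    refine ((hSxm.inter (hφm (d.f_image B hB))).union (hSxm.compl.inter ?_))
    split <;> simp
  have hfull : ∀ (t' : T) (y' : d.Y i), d.f t' = ⟨i, (x, y')⟩ → d.K i x y' Sx = 1 := by
    intro t' y' hft'
    have h1 : d.Kf t' Set.univ = 1 := measure_univ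
    rw [d.Kf_eq t' Set.univ MeasurableSet.univ i x y' hft'] at h1
    rw [← h1]
    congr 1
    ext y''
    simp [hSx, hφ, Set.image_univ]
  have hnull : ∀ (t' : T) (y' : d.Y i), d.f t' = ⟨i, (x, y')⟩ → d.K i x y' Sxᶜ = 0 := by
    intro t' y' hft'
    rw [measure_compl hSxm (measure_ne_top _ _), hfull t' y' hft', measure_univ, tsub_self]
  have hmap : ∀ (t' : T) (y' : d.Y i), d.f t' = ⟨i, (x, y')⟩ →
      d.Kf t' = (d.K i x y').map θ := by
    intro t' y' hft'
    ext B hB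
    rw [Measure.map_apply hθm hB, d.Kf_eq t' B hB i x y' hft', hθpre B]
    have hsub : φ ⁻¹' (d.f '' B) ⊆ Sx := by
      intro y'' hy
      exact Set.mem_preimage.mpr (Set.image_subset_range _ _ hy)
    rw [Set.inter_eq_self_of_subset_right hsub]
    have hNn : (d.K i x y') (Sxᶜ ∩ (if t ∈ B then Set.univ else ∅)) = 0 :=
      measure_mono_null Set.inter_subset_left (hnull t' y' hft')
    have hun : (d.K i x y') (φ ⁻¹' (d.f '' B) ∪ (Sxᶜ ∩ (if t ∈ B then Set.univ else ∅)))
        = (d.K i x y') (φ ⁻¹' (d.f '' B)) :=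
      le_antisymm ((measure_union_le _ _).trans_eq (by rw [hNn, add_zero]))
        (measure_mono Set.subset_union_left)
    rw [hun]
    rfl
  have main : ∀ m : ℕ, ∀ (t' : T) (y' : d.Y i), d.f t' = ⟨i, (x, y')⟩ →
      kiter d.Kf m t' A = kiter (d.K i x) m y' V * U.indicator (fun _ => (1 : ENNReal)) x := by
    intro m
    induction m with
    | zero =>
      intro t' y' hft'
      have hiff : t' ∈ A ↔ x ∈ U ∧ y' ∈ V := by
        constructor
        · intro h
          exact (hrect x y').mp (hft' ▸ Set.mem_image_of_mem _ h)
        · intro h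
          obtain ⟨a, ha, hfa⟩ := (hrect x y').mpr h
          rwa [← d.f_inj (hfa.trans hft'.symm)]
      show Kernel.id t' A = Kernel.id y' V * _
      rw [Kernel.id_apply, Kernel.id_apply, Measure.dirac_apply' _ hA,
        Measure.dirac_apply' _ hV]
      by_cases ht' : t' ∈ A
      · obtain ⟨hxU, hyV⟩ := hiff.mp ht'
        simp [ht', hxU, hyV]
      · have hnot : ¬(x ∈ U ∧ y' ∈ V) := fun h => ht' (hiff.mpr h)
        by_cases hxU : x ∈ U
        · have hyV : y' ∉ V := fun h => hnot ⟨hxU, h⟩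
          simp [ht', hxU, hyV]
        · simp [ht', hxU]
    | succ m ih =>
      intro t' y' hft'
      rw [kiter_succ_comm, Kernel.comp_apply' _ _ _ hA, hmap t' y' hft',
        lintegral_map (Kernel.measurable_coe _ hA) hθm]
      have hae : ∀ᵐ y'' ∂(d.K i x y'), kiter d.Kf m (θ y'') A
          = kiter (d.K i x) m y'' V * U.indicator (fun _ => (1 : ENNReal)) x := by
        refine ae_iff.mpr (measure_mono_null ?_ (hnull t' y' hft'))
        intro y'' hy
        by_contra hc
        have hySx : y'' ∈ Sx := not_not.mp fun h => hc h
        exact hy (ih (θ y'') y'' (hθf y'' hySx))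
      rw [lintegral_congr_ae hae,
        lintegral_mul_const _ (Kernel.measurable_coe _ hV),
        ← Kernel.comp_apply' _ _ _ hV, ← kiter_succ_comm]
  exact main n t y hft
end
end

section
/- In the class-kernel setting, π is a stationary distribution of the class kernel K_f: for every A ∈ Σ, π(A) = ∫_T K_f(t, A) π(dt). -/
open MeasureTheory ProbabilityTheory Filter

universe u v

noncomputable section

/-!
Push `π` forward along the class function `f` and split `f_*π` over the classes `X i × Y i`.
On each class the disintegration hypothesis identifies `f_*π` with the composition-product of
its `X`-marginal with `v i`, and `K_f` only moves the `Y`-coordinate by `K i x`, for which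
`v i x` is stationary; so integrating `K_f(·, A)` class by class returns `f_*π (f '' A) = π A`.
Since `K_f(·, A)` lives on `T`, it is first extended measurably to the whole product space,
which is harmless because `f_*π` is carried by the range of `f`.
-/

open scoped ENNReal

namespace MeasureTheory

section Sigma

variable {ι : Type*} {β : ι → Type*} [∀ i, MeasurableSpace (β i)]

theorem measurableSet_sigma_iff {s : Set (Σ i, β i)} :
    MeasurableSet s ↔ ∀ i, MeasurableSet (Sigma.mk i ⁻¹' s) :=
  MeasurableSpace.measurableSet_iInf

theorem measurableEmbedding_sigmaMk (i : ι) : MeasurableEmbedding (Sigma.mk (β := β) i) where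
  injective := sigma_mk_injective
  measurable _ hs := measurableSet_sigma_iff.1 hs i
  measurableSet_image' {s} hs := by
    refine measurableSet_sigma_iff.2 fun j => ?_
    rcases eq_or_ne j i with rfl | hji
    · rwa [Set.preimage_image_eq s sigma_mk_injective]
    · convert MeasurableSet.empty
      ext y
      simp only [Set.mem_preimage, Set.mem_image, Sigma.mk.injEq, Set.mem_empty_iff_false,
        iff_false, not_exists, not_and]
      exact fun _ _ h _ => hji h.symm

theorem Measure.sum_map_comap_sigmaMk [Countable ι] (μ : Measure (Σ i, β i)) :
    Measure.sum (fun i => (μ.comap (Sigma.mk i)).map (Sigma.mk i)) = μ := by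
  ext s hs
  simp only [Measure.sum_apply _ hs, (measurableEmbedding_sigmaMk _).map_comap,
    Measure.restrict_apply hs]
  have hcover : (⋃ i, Set.range (Sigma.mk (β := β) i)) = Set.univ :=
    Set.eq_univ_of_forall fun c => Set.mem_iUnion.2 ⟨c.1, c.2, rfl⟩
  rw [← measure_iUnion, ← Set.inter_iUnion, hcover, Set.inter_univ]
  · refine fun i j hij => Set.disjoint_left.2 ?_
    rintro _ ⟨-, _, rfl⟩ ⟨-, _, h⟩
    exact hij (congrArg Sigma.fst h).symm
  · exact fun i => hs.inter (measurableEmbedding_sigmaMk i).measurableSet_range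

theorem lintegral_sigma [Countable ι] (μ : Measure (Σ i, β i)) (g : (Σ i, β i) → ℝ≥0∞) :
    ∫⁻ c, g c ∂μ = ∑' i, ∫⁻ b, g ⟨i, b⟩ ∂(μ.comap (Sigma.mk i)) := by
  conv_lhs => rw [← Measure.sum_map_comap_sigmaMk μ]
  simp only [lintegral_sum_measure, (measurableEmbedding_sigmaMk _).lintegral_map]

theorem measure_sigma_eq_tsum [Countable ι] (μ : Measure (Σ i, β i)) {s : Set (Σ i, β i)}
    (hs : MeasurableSet s) : μ s = ∑' i, μ.comap (Sigma.mk i) (Sigma.mk i ⁻¹' s) := by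
  conv_lhs => rw [← Measure.sum_map_comap_sigmaMk μ]
  simp only [Measure.sum_apply _ hs,
    Measure.map_apply (measurableEmbedding_sigmaMk _).measurable hs]

end Sigma

section Disintegration

variable {X Y : Type*} [MeasurableSpace X] [MeasurableSpace Y]

theorem Measure.eq_compProd_of_forall_prod {μ : Measure (X × Y)} [IsFiniteMeasure μ]
    (κ : Kernel X Y) [IsSFiniteKernel κ]
    (h : ∀ (U : Set X) (V : Set Y), MeasurableSet U → MeasurableSet V →
      μ (U ×ˢ V) = ∫⁻ x in U, κ x V ∂(μ.map Prod.fst)) :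
    μ = μ.map Prod.fst ⊗ₘ κ :=
  Measure.ext_prod fun hU hV => by rw [Measure.compProd_apply_prod hU hV, h _ _ hU hV]

/-- `g` stands for `p ↦ K p.1 p.2 S_{p.1}`, which need not be jointly measurable. -/
theorem lintegral_compProd_eq_of_stationaryFor {ρ : Measure X} [SFinite ρ] {κ : Kernel X Y}
    [IsSFiniteKernel κ] {K : X → Kernel Y Y} (hK : ∀ x, StationaryFor (K x) (κ x))
    {S : Set (X × Y)} (hS : MeasurableSet S) {g : X × Y → ℝ≥0∞} (hg : Measurable g)
    (hgS : ∀ᵐ p ∂(ρ ⊗ₘ κ), g p = K p.1 p.2 (Prod.mk p.1 ⁻¹' S)) :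
    ∫⁻ p, g p ∂(ρ ⊗ₘ κ) = (ρ ⊗ₘ κ) S := by
  rw [Measure.lintegral_compProd hg, Measure.compProd_apply hS]
  refine lintegral_congr_ae ?_
  filter_upwards [Measure.ae_ae_of_ae_compProd hgS] with x hx
  rw [lintegral_congr_ae hx]
  exact hK x _ (measurable_prodMk_left hS)

end Disintegration

end MeasureTheory

namespace ClassKernelData

variable {T : Type u} [MeasurableSpace T] {π : Measure T} (d : ClassKernelData.{u, v} T π)

theorem measurableEmbedding_f : MeasurableEmbedding d.f :=
  ⟨d.f_inj, d.f_meas, fun s => d.f_image s⟩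

def vKernel (i : d.I) : Kernel (d.X i) (d.Y i) :=
  ⟨d.v i, Measure.measurable_of_measurable_coe _ (d.v_meas i)⟩

instance (i : d.I) : IsMarkovKernel (d.vKernel i) := ⟨d.v_prob i⟩

/-- The paper's `(f_*π)_i`, without the normalization. -/
def classMeasure (i : d.I) : Measure (d.X i × d.Y i) :=
  (π.map d.f).comap (Sigma.mk (β := fun j => d.X j × d.Y j) i)

instance [IsFiniteMeasure π] (i : d.I) : IsFiniteMeasure (d.classMeasure i) :=
  IsFiniteMeasure_comap _

theorem classMeasure_eq_compProd [IsFiniteMeasure π] (i : d.I) :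
    d.classMeasure i = (d.classMeasure i).map Prod.fst ⊗ₘ d.vKernel i := by
  refine Measure.eq_compProd_of_forall_prod _ fun U V hU hV => ?_
  by_cases hpos : 0 < π.map d.f (Set.range (Sigma.mk i))
  · exact d.v_eq i hpos U V hU hV
  · have h0 : d.classMeasure i = 0 := by
      rw [← Measure.measure_univ_eq_zero, classMeasure,
        (measurableEmbedding_sigmaMk i).comap_apply, Set.image_univ]
      exact nonpos_iff_eq_zero.1 (not_lt.1 hpos)
    simp [h0]

theorem ae_classMeasure_mem_range (i : d.I) :
    ∀ᵐ p ∂(d.classMeasure i), (⟨i, p⟩ : Σ j, d.X j × d.Y j) ∈ Set.range d.f := by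
  rw [ae_iff, classMeasure, (measurableEmbedding_sigmaMk i).comap_apply]
  refine measure_mono_null ?_
    (ae_map_mem_range d.f d.measurableEmbedding_f.measurableSet_range π)
  rintro _ ⟨p, hp, rfl⟩
  exact hp

theorem ae_classMeasure_eq_K {A : Set T} (hA : MeasurableSet A)
    {G : (Σ i, d.X i × d.Y i) → ℝ≥0∞} (hG : G ∘ d.f = fun t => d.Kf t A) (i : d.I) :
    ∀ᵐ p ∂(d.classMeasure i), G ⟨i, p⟩ = d.K i p.1 p.2
      (Prod.mk p.1 ⁻¹' (Sigma.mk (β := fun j => d.X j × d.Y j) i ⁻¹' (d.f '' A))) := by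
  filter_upwards [d.ae_classMeasure_mem_range i] with ⟨x, y⟩ ⟨t, ht⟩
  rw [← ht]
  exact (congrFun hG t).trans (d.Kf_eq t A hA i x y ht)

theorem lintegral_classMeasure_eq_of_stationaryFor [IsFiniteMeasure π]
    (hstat : ∀ i x, StationaryFor (d.K i x) (d.v i x)) {A : Set T} (hA : MeasurableSet A)
    {G : (Σ i, d.X i × d.Y i) → ℝ≥0∞} (hG : Measurable G) (hGf : G ∘ d.f = fun t => d.Kf t A)
    (i : d.I) :
    ∫⁻ p, G ⟨i, p⟩ ∂(d.classMeasure i)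
      = d.classMeasure i (Sigma.mk (β := fun j => d.X j × d.Y j) i ⁻¹' (d.f '' A)) := by
  have hae := d.ae_classMeasure_eq_K hA hGf i
  rw [d.classMeasure_eq_compProd i] at hae ⊢
  exact lintegral_compProd_eq_of_stationaryFor (hstat i)
    ((measurableEmbedding_sigmaMk i).measurable (d.f_image A hA))
    (hG.comp (measurableEmbedding_sigmaMk i).measurable) hae

end ClassKernelData

theorem stmt2_general {T : Type u} [MeasurableSpace T] (π : Measure T) [IsProbabilityMeasure π]
    (d : ClassKernelData.{u, v} T π)
    (hstat : ∀ i x, StationaryFor (d.K i x) (d.v i x)) :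
    StationaryFor d.Kf π := by
  intro A hA
  have hfA := d.f_image A hA
  obtain ⟨G, hG, hGf⟩ :=
    d.measurableEmbedding_f.exists_measurable_extend (d.Kf.measurable_coe hA) fun _ => ⟨0⟩
  calc ∫⁻ t, d.Kf t A ∂π = ∫⁻ c, G c ∂(π.map d.f) := by
        rw [d.measurableEmbedding_f.lintegral_map, ← hGf]; rfl
    _ = ∑' i, ∫⁻ p, G ⟨i, p⟩ ∂(d.classMeasure i) := lintegral_sigma _ _
    _ = ∑' i, d.classMeasure i (Sigma.mk (β := fun j => d.X j × d.Y j) i ⁻¹' (d.f '' A)) :=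
        tsum_congr (d.lintegral_classMeasure_eq_of_stationaryFor hstat hA hG hGf)
    _ = π.map d.f (d.f '' A) := (measure_sigma_eq_tsum _ hfA).symm
    _ = π A := by rw [Measure.map_apply d.f_meas hfA, Set.preimage_image_eq A d.f_inj]

/-- In the class-kernel setting, `π` is a stationary distribution of the class kernel `K_f`:
for every measurable `A`, `π(A) = ∫_T K_f(t, A) π(dt)`. -/
theorem stmt2 {T : Type u} [MeasurableSpace T] (π : Measure T) [IsProbabilityMeasure π]
    (d : ClassKernelData.{u, v} T π)
    (hirr : ∀ i x, PiIrreducible (d.K i x) (d.v i x))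
    (haper : ∀ i x, AperiodicK (d.K i x) (d.v i x))
    (hstat : ∀ i x, StationaryFor (d.K i x) (d.v i x)) :
    StationaryFor d.Kf π :=
  stmt2_general π d hstat
end
end

section
/- Let (T₁, Σ₁) and (T₂, Σ₂) be measurable spaces and φ : T₁ → T₂ a bijection such that both φ and its inverse are measurable (a measurable equivalence). Let ν be a probability measure on (T₁, Σ₁) and μ = φ_*ν its pushforward. Let K be a Markov transition kernel on (T₂, Σ₂) that is μ-irreducible, aperiodic relative to μ, and has stationary distribution μ. Define K′(t, A) = K(φ(t), φ(A)) for t ∈ T₁ and A ∈ Σ₁, where φ(A) denotes the image of A under φ. Then K′ is a Markov transition kernel on (T₁, Σ₁) that is ν-irreducible, aperiodic relative to ν, and has stationary distribution ν. -/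
open MeasureTheory ProbabilityTheory Filter

universe u v

noncomputable section

/-- Let `φ : T₁ → T₂` be a bijection that is measurable with measurable inverse, `ν` a
probability measure on `T₁` with pushforward `μ = φ_*ν`, and `K` a Markov transition kernel
on `T₂` that is `μ`-irreducible, aperiodic relative to `μ`, and has stationary distribution
`μ`. Then the kernel `K'` on `T₁` defined by `K'(t, A) = K(φ(t), φ(A))` is a Markov
transition kernel that is `ν`-irreducible, aperiodic relative to `ν`, and has stationary
distribution `ν`. -/
theorem stmt12 {T₁ : Type u} {T₂ : Type v} [MeasurableSpace T₁] [MeasurableSpace T₂]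
    (φ : T₁ ≃ T₂) (hφ : Measurable φ) (hφinv : Measurable φ.symm)
    (ν : Measure T₁) [IsProbabilityMeasure ν]
    (K : Kernel T₂ T₂) [IsMarkovKernel K]
    (hirr : PiIrreducible K (ν.map φ)) (haper : AperiodicK K (ν.map φ))
    (hstat : StationaryFor K (ν.map φ)) :
    ∃ K' : Kernel T₁ T₁,
      (∀ (t : T₁) (A : Set T₁), MeasurableSet A → K' t A = K (φ t) (φ '' A)) ∧
      IsMarkovKernel K' ∧ PiIrreducible K' ν ∧ AperiodicK K' ν ∧ StationaryFor K' ν := by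
  set e : T₁ ≃ᵐ T₂ := ⟨φ, hφ, hφinv⟩ with he
  set K' : Kernel T₁ T₁ := (K.map φ.symm).comap φ hφ with hK'
  have himg : ∀ A : Set T₁, φ '' A = φ.symm ⁻¹' A := fun A => by
    ext x; simp [Set.mem_image, Equiv.symm_apply_eq, eq_comm]
  have hK'meas : ∀ t : T₁, K' t = (K (φ t)).map φ.symm := by
    intro t; rw [hK', Kernel.comap_apply, Kernel.map_apply _ hφinv]
  have hmap : ∀ (μ : Measure T₂) (A : Set T₁), μ.map φ.symm A = μ (φ.symm ⁻¹' A) :=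
    fun μ A => e.symm.map_apply A
  have hK'app : ∀ (t : T₁) (A : Set T₁), K' t A = K (φ t) (φ.symm ⁻¹' A) := by
    intro t A
    rw [hK'meas, hmap]
  -- map lemma for iterates
  have hiter : ∀ (n : ℕ) (t : T₁), kiter K' n t = (kiter K n (φ t)).map φ.symm := by
    intro n
    induction n with
    | zero =>
      intro t
      show Kernel.id t = (Kernel.id (φ t)).map φ.symm
      rw [Kernel.id_apply, Kernel.id_apply]
      ext A hA
      rw [hmap]
      rw [Measure.dirac_apply' _ hA, Measure.dirac_apply' _ (hφinv hA)]
      by_cases ht : t ∈ A <;>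
        simp [Set.indicator_apply, ht, Set.mem_preimage, Equiv.symm_apply_apply]
    | succ n ih =>
      intro t
      show (K' ∘ₖ kiter K' n) t = ((K ∘ₖ kiter K n) (φ t)).map φ.symm
      ext A hA
      rw [hmap, Kernel.comp_apply' _ _ _ hA,
        Kernel.comp_apply' _ _ _ (hφinv hA)]
      calc ∫⁻ s, K' s A ∂(kiter K' n t)
          = ∫⁻ s, K (φ s) (φ.symm ⁻¹' A) ∂((kiter K n (φ t)).map φ.symm) := by
            rw [ih t]; exact lintegral_congr fun s => hK'app s A
        _ = ∫⁻ s', K (φ (φ.symm s')) (φ.symm ⁻¹' A) ∂(kiter K n (φ t)) := by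
            rw [lintegral_map (by exact (Kernel.measurable_coe K (hφinv hA)).comp hφ) hφinv]
        _ = ∫⁻ s', K s' (φ.symm ⁻¹' A) ∂(kiter K n (φ t)) := by
            simp [Equiv.apply_symm_apply]
  have hνA : ∀ A : Set T₁, MeasurableSet A → (ν.map φ) (φ.symm ⁻¹' A) = ν A := by
    intro A hA
    rw [Measure.map_apply hφ (hφinv hA)]
    simp [Set.preimage_preimage]
  refine ⟨K', ?_, ?_, ?_, ?_, ?_⟩
  · intro t A hA; rw [hK'app, himg]
  · -- IsMarkovKernel
    have : IsMarkovKernel (K.map φ.symm) := Kernel.IsMarkovKernel.map K hφinv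
    exact Kernel.IsMarkovKernel.comap _ hφ
  · -- irreducible
    intro t A hA hpos
    obtain ⟨n, hn, hp⟩ := hirr (φ t) (φ.symm ⁻¹' A) (hφinv hA) (by rwa [hνA A hA])
    refine ⟨n, hn, ?_⟩
    rw [hiter n t, hmap]
    exact hp
  · -- aperiodic
    intro ⟨d, hd, E, N, hEm, hNm, hEne, hdisj, hcov, hN0, hstep⟩
    refine haper ⟨d, hd, fun i => φ.symm ⁻¹' (E i), φ.symm ⁻¹' N,
      fun i => hφinv (hEm i), hφinv hNm, fun i => ?_, ?_, ?_, ?_, ?_⟩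
    · obtain ⟨x, hx⟩ := hEne i
      exact ⟨φ x, by simpa [Equiv.symm_apply_apply] using hx⟩
    · intro i j hij
      exact (hdisj hij).preimage _
    · rw [← Set.preimage_iUnion, ← Set.preimage_union, hcov, Set.preimage_univ]
    · rw [hνA N hNm] at *
      · exact hN0
    · intro i s hs
      have := hstep i (φ.symm s) hs
      rw [hK'app] at this
      simpa [Equiv.apply_symm_apply] using this
  · -- stationary
    intro A hA
    calc ∫⁻ t, K' t A ∂ν
        = ∫⁻ t, K (φ t) (φ.symm ⁻¹' A) ∂ν := lintegral_congr fun t => hK'app t A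
      _ = ∫⁻ s, K s (φ.symm ⁻¹' A) ∂(ν.map φ) := by
          rw [lintegral_map (Kernel.measurable_coe K (hφinv hA)) hφ]
      _ = (ν.map φ) (φ.symm ⁻¹' A) := hstat _ (hφinv hA)
      _ = ν A := hνA A hA
end
end
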